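/- arXiv:math/0612730 — 4 statements merged into one kernel-verified Lean document; each statement's English description precedes it below -/
import Mathlib

section
/- The operator T_0 satisfies the quadratic Hecke relation (T_0 + q^{-1}cd)(T_0 + 1) = 0 as an operator on the space of Laurent polynomials in z. -/
open scoped BigOperators

noncomputable section

/-- The field of rational functions over ℂ, in which Laurent polynomials live. -/
local notation "F" => RatFunc ℂ

/-- Scalar constants in `F`. -/
def Cc (x : ℂ) : F := RatFunc.C x

/-- The variable `z`. -/
def Xv : F := RatFunc.X

/-- Substitution `z ↦ t` in a rational function (well defined since the
substitution points used here are transcendental over ℂ). -/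
def subst (t : F) (f : F) : F := RatFunc.eval (RatFunc.C) t f

/-- `f` is a Laurent polynomial in `z`. -/
def IsLaurent (f : F) : Prop :=
  ∃ (p : Polynomial ℂ) (n : ℕ), f = algebraMap (Polynomial ℂ) F p / Xv ^ n

/-- The DAHA operator `T₁` of the basic representation. -/
def T1op (a b : ℂ) (f : F) : F :=
  ((Cc a + Cc b) * Xv - (1 + Cc a * Cc b)) / (1 - Xv ^ 2) * f
    + ((1 - Cc a * Xv) * (1 - Cc b * Xv)) / (1 - Xv ^ 2) * subst Xv⁻¹ f

/-- The DAHA operator `T₀` of the basic representation. -/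
def T0op (q c d : ℂ) (f : F) : F :=
  (Cc q)⁻¹ * Xv * ((Cc c * Cc d + Cc q) * Xv - (Cc c + Cc d) * Cc q) / (Cc q - Xv ^ 2) * f
    - ((Cc c - Xv) * (Cc d - Xv)) / (Cc q - Xv ^ 2) * subst (Cc q * Xv⁻¹) f

/-- The inverse of `T₁`: `T₁⁻¹ = -(ab)⁻¹T₁ - (1 + (ab)⁻¹)`. -/
def T1inv (a b : ℂ) (f : F) : F :=
  -(Cc a * Cc b)⁻¹ * T1op a b f - (1 + (Cc a * Cc b)⁻¹) * f

/-- The inverse of `T₀`: `T₀⁻¹ = -q(cd)⁻¹T₀ - (1 + q(cd)⁻¹)`. -/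
def T0inv (q c d : ℂ) (f : F) : F :=
  -(Cc q * (Cc c * Cc d)⁻¹) * T0op q c d f - (1 + Cc q * (Cc c * Cc d)⁻¹) * f

/-- `Y = T₁T₀`. -/
def Yop (q a b c d : ℂ) (f : F) : F := T1op a b (T0op q c d f)

/-- `Y⁻¹ = T₀⁻¹T₁⁻¹`. -/
def Yinv (q a b c d : ℂ) (f : F) : F := T0inv q c d (T1inv a b f)

/-- `D = Y + q⁻¹abcd·Y⁻¹`. -/
def Dop (q a b c d : ℂ) (f : F) : F :=
  Yop q a b c d f + Cc (q⁻¹ * (a * b * c * d)) * Yinv q a b c d f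

/-- The Askey–Wilson second order q-difference operator `D_sym`. -/
def DsymOp (q a b c d : ℂ) (f : F) : F :=
  ((1 - Cc a * Xv) * (1 - Cc b * Xv) * (1 - Cc c * Xv) * (1 - Cc d * Xv)) /
      ((1 - Xv ^ 2) * (1 - Cc q * Xv ^ 2)) * (subst (Cc q * Xv) f - f)
    + ((Cc a - Xv) * (Cc b - Xv) * (Cc c - Xv) * (Cc d - Xv)) /
      ((1 - Xv ^ 2) * (Cc q - Xv ^ 2)) * (subst ((Cc q)⁻¹ * Xv) f - f)
    + (1 + (Cc q)⁻¹ * Cc a * Cc b * Cc c * Cc d) * f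

/-- q-Pochhammer symbol `(x;q)_k`. -/
def qPoch (x q : ℂ) (k : ℕ) : ℂ := ∏ j ∈ Finset.range k, (1 - x * q ^ j)

/-- The monic Askey–Wilson Laurent polynomial `P_n[z;a,b,c,d|q]`. -/
def AWP (q a b c d : ℂ) (n : ℕ) : F :=
  Cc (a⁻¹ ^ n) * ∑ k ∈ Finset.range (n + 1),
    Cc (qPoch (q⁻¹ ^ n) q k * qPoch (a * b * q ^ k) q (n - k) * qPoch (a * c * q ^ k) q (n - k)
        * qPoch (a * d * q ^ k) q (n - k) * q ^ k
        / (qPoch q q k * qPoch (a * b * c * d * q ^ (n + k) / q) q (n - k)))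
      * (∏ j ∈ Finset.range k, (1 - Cc a * Xv * Cc (q ^ j)))
      * (∏ j ∈ Finset.range k, (1 - Cc a * Xv⁻¹ * Cc (q ^ j)))

/-- `Q_n[z] := (ab)⁻¹ z⁻¹ (1-az)(1-bz) P_{n-1}[z;qa,qb,c,d|q]`. -/
def Qpoly (q a b c d : ℂ) (n : ℕ) : F :=
  (Cc (a * b))⁻¹ * Xv⁻¹ * (1 - Cc a * Xv) * (1 - Cc b * Xv) *
    AWP q (q * a) (q * b) c d (n - 1)

/-- Elementary symmetric polynomials in a,b,c,d. -/
def esym1 (a b c d : ℂ) : ℂ := a + b + c + d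
def esym2 (a b c d : ℂ) : ℂ := a*b + a*c + b*c + a*d + b*d + c*d
def esym3 (a b c d : ℂ) : ℂ := a*b*c + a*b*d + a*c*d + b*c*d
def esym4 (a b c d : ℂ) : ℂ := a*b*c*d


/-!
Write `T₀ = A + B σ`, where `σ` is the field automorphism `z ↦ q / z` of `ℂ(z)` (well defined
because `q / z` is transcendental over `ℂ`). As `σ² = 1`, applying `(T₀ + k)(T₀ + 1)`, with
`k = q⁻¹cd`, to `f` gives `(A² + B σB + (1 + k)A + k) f + B (A + σA + 1 + k) σf`, and both
coefficients vanish identically in `ℂ(z)`. So the relation holds on all rational functions.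
-/

open RatFunc

section TwistedOperator

variable {R : Type*} [CommRing R] (σ : R →+* R)

def twistedOp (A B f : R) : R := A * f + B * σ f

theorem twistedOp_quadratic_relation (hσ : Function.Involutive σ) {A B k : R}
    (h₁ : A + σ A + 1 + k = 0) (h₂ : A * A + B * σ B + (1 + k) * A + k = 0) (f : R) :
    twistedOp σ A B (twistedOp σ A B f + f) + k * (twistedOp σ A B f + f) = 0 := by
  simp only [twistedOp, map_add, map_mul, hσ _]
  linear_combination f * h₂ + B * σ f * h₁

end TwistedOperator

namespace RatFunc

variable {K : Type*} [Field K] {q : K}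

theorem C_sub_X_sq_ne_zero (a : K) : (C a - X ^ 2 : RatFunc K) ≠ 0 := by
  rw [← algebraMap_C, ← algebraMap_X, ← map_pow, ← map_sub]
  refine algebraMap_ne_zero fun h => ?_
  simpa using congrArg (Polynomial.coeff · 2) h

theorem transcendental_C_mul_X_inv (hq : q ≠ 0) : Transcendental K (C q * X⁻¹ : RatFunc K) := by
  refine transcendental_of_ne_C _ fun ⟨c, hc⟩ => hq ?_
  have h : algebraMap (Polynomial K) (RatFunc K) (Polynomial.C q) =
      algebraMap (Polynomial K) (RatFunc K) (Polynomial.C c * Polynomial.X) := by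
    rw [map_mul, algebraMap_C, algebraMap_C, algebraMap_X, ← hc,
      mul_assoc, inv_mul_cancel₀ X_ne_zero, mul_one]
  simpa using congrArg (Polynomial.coeff · 0) (algebraMap_injective K h)

def qInversion (hq : q ≠ 0) : RatFunc K →ₐ[K] RatFunc K :=
  (IntermediateField.val _).comp
    (algEquivOfTranscendental _ (transcendental_C_mul_X_inv hq)).toAlgHom

@[simp]
theorem qInversion_X (hq : q ≠ 0) : qInversion hq X = C q * X⁻¹ := by
  simp [qInversion]

@[simp]
theorem qInversion_C (hq : q ≠ 0) (a : K) : qInversion hq (C a) = C a := by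
  rw [← algebraMap_eq_C, AlgHom.commutes]

theorem qInversion_apply (hq : q ≠ 0) (f : RatFunc K) :
    qInversion hq f = eval C (C q * X⁻¹) f := by
  simp [qInversion, algEquivOfTranscendental_apply, eval, Polynomial.aeval_def, algebraMap_eq_C]

theorem qInversion_involutive (hq : q ≠ 0) : Function.Involutive (qInversion hq) := by
  suffices (qInversion hq).comp (qInversion hq) = AlgHom.id K _ from fun f => congrArg (· f) this
  refine IsLocalization.algHom_ext (nonZeroDivisors (Polynomial K)) (Polynomial.algHom_ext ?_)
  change qInversion hq (qInversion hq (algebraMap _ _ Polynomial.X)) = algebraMap _ _ Polynomial.X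
  have hC : (C q : RatFunc K) ≠ 0 := by simpa using hq
  simp [hC, mul_comm X]

theorem qInversion_C_sub_X_sq (hq : q ≠ 0) :
    qInversion hq (C q - X ^ 2) = -C q * (C q - X ^ 2) / X ^ 2 := by
  have hC : (C q : RatFunc K) ≠ 0 := by simpa using hq
  simp only [map_sub, map_pow, qInversion_C, qInversion_X]
  field_simp [X_ne_zero]
  ring

end RatFunc

def t0MulCoeff (q c d : ℂ) : F :=
  (Cc q)⁻¹ * Xv * ((Cc c * Cc d + Cc q) * Xv - (Cc c + Cc d) * Cc q) / (Cc q - Xv ^ 2)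

def t0ReflCoeff (q c d : ℂ) : F := -((Cc c - Xv) * (Cc d - Xv)) / (Cc q - Xv ^ 2)

theorem T0op_eq_twistedOp {q : ℂ} (hq : q ≠ 0) (c d : ℂ) (f : F) :
    T0op q c d f = twistedOp (qInversion hq : F →+* F) (t0MulCoeff q c d) (t0ReflCoeff q c d) f := by
  simp only [T0op, twistedOp, subst, t0MulCoeff, t0ReflCoeff, Cc, Xv, RingHom.coe_coe,
    qInversion_apply]
  ring

theorem t0MulCoeff_add_qInversion {q : ℂ} (hq : q ≠ 0) (c d : ℂ) :
    t0MulCoeff q c d + qInversion hq (t0MulCoeff q c d) + 1 + Cc (q⁻¹ * (c * d)) = 0 := by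
  have hC : (C q : F) ≠ 0 := by simpa using hq
  have hD := C_sub_X_sq_ne_zero q
  simp only [t0MulCoeff, Cc, Xv, map_div₀, map_mul, map_sub, map_add, map_inv₀, qInversion_C,
    qInversion_X, qInversion_C_sub_X_sq hq]
  field_simp [X_ne_zero]
  ring

theorem t0Coeff_quadratic {q : ℂ} (hq : q ≠ 0) (c d : ℂ) :
    t0MulCoeff q c d * t0MulCoeff q c d + t0ReflCoeff q c d * qInversion hq (t0ReflCoeff q c d)
      + (1 + Cc (q⁻¹ * (c * d))) * t0MulCoeff q c d + Cc (q⁻¹ * (c * d)) = 0 := by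
  have hC : (C q : F) ≠ 0 := by simpa using hq
  have hD := C_sub_X_sq_ne_zero q
  simp only [t0MulCoeff, t0ReflCoeff, Cc, Xv, map_div₀, map_mul, map_sub, map_neg, map_inv₀,
    qInversion_C, qInversion_X, qInversion_C_sub_X_sq hq]
  field_simp [X_ne_zero]
  ring

theorem stmt2_general (q c d : ℂ) (hq : q ≠ 0) :
    ∀ f : RatFunc ℂ, IsLaurent f →
      T0op q c d (T0op q c d f + f) + Cc (q⁻¹ * (c * d)) * (T0op q c d f + f) = 0 := by
  intro f _
  simp only [T0op_eq_twistedOp hq]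
  exact twistedOp_quadratic_relation _ (qInversion_involutive hq)
    (t0MulCoeff_add_qInversion hq c d) (t0Coeff_quadratic hq c d) f

theorem stmt2 (q a b c d : ℂ) (hq : q ≠ 0) (hroot : ∀ m : ℕ, 1 ≤ m → q ^ m ≠ 1)
    (ha : a ≠ 0) (hb : b ≠ 0) (hc : c ≠ 0) (hd : d ≠ 0) :
    ∀ f : RatFunc ℂ, IsLaurent f →
      T0op q c d (T0op q c d f + f) + Cc (q⁻¹ * (c * d)) * (T0op q c d f + f) = 0 :=
  stmt2_general q c d hq

end
end

section
/- A Laurent polynomial f satisfies T_1 f = −ab·f if and only if f is symmetric, i.e. f[z] = f[z^{-1}]. -/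
open scoped BigOperators

noncomputable section

/-- The field of rational functions over ℂ, in which Laurent polynomials live. -/
local notation "F" => RatFunc ℂ

theorem one_sub_Cc_mul_Xv_ne_zero (c : ℂ) : 1 - Cc c * Xv ≠ 0 := by
  have h : (1 : F) - Cc c * Xv = algebraMap (Polynomial ℂ) F (1 - Polynomial.C c * Polynomial.X) := by
    simp [Xv, Cc, RatFunc.algebraMap_X, RatFunc.algebraMap_C]
  rw [h, map_ne_zero_iff _ (RatFunc.algebraMap_injective ℂ)]
  intro hp
  simpa using congrArg (Polynomial.coeff · 0) hp

theorem one_sub_Xv_sq_ne_zero : 1 - Xv ^ 2 ≠ 0 := by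
  have h : (1 : F) - Xv ^ 2 = (1 - Cc 1 * Xv) * (1 - Cc (-1) * Xv) := by
    simp only [Cc, map_one, map_neg]
    ring
  rw [h]
  exact mul_ne_zero (one_sub_Cc_mul_Xv_ne_zero 1) (one_sub_Cc_mul_Xv_ne_zero (-1))

theorem Cc_mul (x y : ℂ) : Cc (x * y) = Cc x * Cc y := map_mul _ x y

-- The two coefficients of `T₁` add up to `-ab`.
theorem T1op_add_Cc_mul (a b : ℂ) (f : F) :
    T1op a b f + Cc (a * b) * f
      = (1 - Cc a * Xv) * (1 - Cc b * Xv) / (1 - Xv ^ 2) * (subst Xv⁻¹ f - f) := by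
  rw [T1op, Cc_mul]
  field_simp [one_sub_Xv_sq_ne_zero]
  ring

theorem T1op_eq_neg_mul_iff (a b : ℂ) (f : F) :
    T1op a b f = -(Cc (a * b)) * f ↔ subst Xv⁻¹ f = f := by
  have hcoeff : (1 - Cc a * Xv) * (1 - Cc b * Xv) / (1 - Xv ^ 2) ≠ 0 :=
    div_ne_zero (mul_ne_zero (one_sub_Cc_mul_Xv_ne_zero a) (one_sub_Cc_mul_Xv_ne_zero b))
      one_sub_Xv_sq_ne_zero
  rw [neg_mul, eq_neg_iff_add_eq_zero, T1op_add_Cc_mul, mul_eq_zero, or_iff_right hcoeff,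
    sub_eq_zero]

theorem stmt5_general (a b : ℂ) :
    ∀ f : RatFunc ℂ, IsLaurent f →
      (T1op a b f = -(Cc (a * b)) * f ↔ subst Xv⁻¹ f = f) :=
  fun f _ => T1op_eq_neg_mul_iff a b f

theorem stmt5 (q a b : ℂ) (hq : q ≠ 0) (hroot : ∀ m : ℕ, 1 ≤ m → q ^ m ≠ 1)
    (ha : a ≠ 0) (hb : b ≠ 0) :
    ∀ f : RatFunc ℂ, IsLaurent f →
      (T1op a b f = -(Cc (a * b)) * f ↔ subst Xv⁻¹ f = f) :=
  stmt5_general a b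

end
end

section
/- A Laurent polynomial f satisfies T_0 f = −q^{-1}cd·f if and only if f[z] = f[qz^{-1}]. -/
open scoped BigOperators

noncomputable section

/-- The field of rational functions over ℂ, in which Laurent polynomials live. -/
local notation "F" => RatFunc ℂ

lemma Cc_injective : Function.Injective Cc := (RatFunc.C (K := ℂ)).injective

lemma algF_injective : Function.Injective (algebraMap (Polynomial ℂ) F) :=
  IsFractionRing.injective _ _

theorem stmt7 (q c d : ℂ) (hq : q ≠ 0) (hroot : ∀ m : ℕ, 1 ≤ m → q ^ m ≠ 1)
    (hc : c ≠ 0) (hd : d ≠ 0) :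
    ∀ f : RatFunc ℂ, IsLaurent f →
      (T0op q c d f = -(Cc (q⁻¹ * (c * d))) * f ↔ subst (Cc q * Xv⁻¹) f = f) := by
  intro f _
  set g := subst (Cc q * Xv⁻¹) f with hg
  have hCq : (Cc q : F) ≠ 0 := fun h => hq (Cc_injective (by simpa [Cc] using h))
  have hden : (Cc q : F) - Xv ^ 2 ≠ 0 := by
    intro h
    have h2 : algebraMap (Polynomial ℂ) F (Polynomial.C q - Polynomial.X ^ 2) = 0 := by
      rw [map_sub, map_pow, RatFunc.algebraMap_C, RatFunc.algebraMap_X]; exact h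
    have h3 : (Polynomial.C q - Polynomial.X ^ 2 : Polynomial ℂ) = 0 := by
      simpa using algF_injective (by simpa using h2)
    have := congrArg (fun p => Polynomial.coeff p 2) h3
    simp [Polynomial.coeff_C] at this
  have hcX : (Cc c : F) - Xv ≠ 0 := by
    intro h
    have h2 : algebraMap (Polynomial ℂ) F (Polynomial.C c - Polynomial.X) = 0 := by
      rw [map_sub, RatFunc.algebraMap_C, RatFunc.algebraMap_X]; exact h
    have h3 : (Polynomial.C c - Polynomial.X : Polynomial ℂ) = 0 := by
      simpa using algF_injective (by simpa using h2)
    have := congrArg (fun p => Polynomial.coeff p 1) h3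
    simp [Polynomial.coeff_C] at this
  have hdX : (Cc d : F) - Xv ≠ 0 := by
    intro h
    have h2 : algebraMap (Polynomial ℂ) F (Polynomial.C d - Polynomial.X) = 0 := by
      rw [map_sub, RatFunc.algebraMap_C, RatFunc.algebraMap_X]; exact h
    have h3 : (Polynomial.C d - Polynomial.X : Polynomial ℂ) = 0 := by
      simpa using algF_injective (by simpa using h2)
    have := congrArg (fun p => Polynomial.coeff p 1) h3
    simp [Polynomial.coeff_C] at this
  have hCcval : (Cc (q⁻¹ * (c * d)) : F) = (Cc q)⁻¹ * (Cc c * Cc d) := by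
    simp [Cc, map_mul, map_inv₀]
  have key : T0op q c d f + Cc (q⁻¹ * (c * d)) * f
      = ((Cc c - Xv) * (Cc d - Xv)) / (Cc q - Xv ^ 2) * (f - g) := by
    rw [T0op, hCcval, ← hg]
    field_simp
    ring
  have hB : ((Cc c - Xv) * (Cc d - Xv)) / ((Cc q : F) - Xv ^ 2) ≠ 0 :=
    div_ne_zero (mul_ne_zero hcX hdX) hden
  constructor
  · intro h
    have h0 : ((Cc c - Xv) * (Cc d - Xv)) / ((Cc q : F) - Xv ^ 2) * (f - g) = 0 := by
      rw [← key, h]; ring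
    have := (mul_eq_zero.mp h0).resolve_left hB
    have : f = g := by linear_combination this
    exact this.symm
  · intro h
    have h0 : T0op q c d f + Cc (q⁻¹ * (c * d)) * f = 0 := by
      rw [key, h]; ring
    linear_combination h0

end
end

section
/- If c and d are distinct from qc^{-1} and qd^{-1}, then a Laurent polynomial f satisfies T_0 f = −f if and only if f[z] = z^{-1}(c−z)(d−z)·g[z] for some Laurent polynomial g satisfying g[z] = g[qz^{-1}]. -/
open scoped BigOperators

noncomputable section

/-- The field of rational functions over ℂ, in which Laurent polynomials live. -/
local notation "F" => RatFunc ℂ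

lemma amap_ne {p : Polynomial ℂ} (hp : p ≠ 0) : algebraMap (Polynomial ℂ) F p ≠ 0 :=
  RatFunc.algebraMap_ne_zero hp

lemma Xv_ne : (Xv : F) ≠ 0 := RatFunc.X_ne_zero

lemma amap_C (a : ℂ) : algebraMap (Polynomial ℂ) F (Polynomial.C a) = Cc a :=
  RatFunc.algebraMap_C a

lemma amap_X : algebraMap (Polynomial ℂ) F Polynomial.X = Xv := RatFunc.algebraMap_X

lemma Cc_ne {a : ℂ} (ha : a ≠ 0) : Cc a ≠ 0 := by
  rw [← amap_C]; exact amap_ne (by simpa using ha)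

lemma CmX_ne (a : ℂ) : Cc a - Xv ≠ 0 := by
  rw [← amap_C, ← amap_X, ← map_sub]
  refine amap_ne fun h => ?_
  have := congrArg (fun p => Polynomial.coeff p 1) h
  simp at this

lemma CXmC_ne {a : ℂ} (ha : a ≠ 0) (b : ℂ) : Cc a * Xv - Cc b ≠ 0 := by
  rw [← amap_C, ← amap_C, ← amap_X, ← map_mul, ← map_sub]
  refine amap_ne fun h => ?_
  have := congrArg (fun p => Polynomial.coeff p 1) h
  simp [ha] at this

lemma qmX2_ne (a : ℂ) : Cc a - Xv ^ 2 ≠ 0 := by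
  rw [← amap_C, ← amap_X, ← map_pow, ← map_sub]
  refine amap_ne fun h => ?_
  have := congrArg (fun p => Polynomial.coeff p 2) h
  simp [Polynomial.coeff_X_pow] at this

lemma subst_div_pow (t : F) (ht : t ≠ 0) (p : Polynomial ℂ) (n : ℕ) :
    subst t (algebraMap (Polynomial ℂ) F p / Xv ^ n) = Polynomial.eval₂ RatFunc.C t p / t ^ n := by
  have hXn : (Xv : F) ^ n = algebraMap (Polynomial ℂ) F (Polynomial.X ^ n) := by
    rw [map_pow, amap_X]
  have hd : RatFunc.denom (algebraMap (Polynomial ℂ) F p / Xv ^ n) ∣ Polynomial.X ^ n := by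
    rw [hXn]; exact RatFunc.denom_div_dvd p (Polynomial.X ^ n)
  obtain ⟨u, hu⟩ := hd
  have hden : Polynomial.eval₂ RatFunc.C t
      (RatFunc.denom (algebraMap (Polynomial ℂ) F p / Xv ^ n)) ≠ 0 := by
    intro h0
    have : Polynomial.eval₂ RatFunc.C t (Polynomial.X ^ n) = 0 := by
      rw [hu, Polynomial.eval₂_mul, h0, zero_mul]
    rw [Polynomial.eval₂_X_pow] at this
    exact pow_ne_zero n ht this
  have hden2 : Polynomial.eval₂ RatFunc.C t (RatFunc.denom ((Xv : F) ^ n)) ≠ 0 := by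
    rw [hXn, RatFunc.denom_algebraMap]
    simp
  have key := RatFunc.eval_mul (f := RatFunc.C) (a := t) hden hden2
  rw [div_mul_cancel₀ _ (by rw [hXn]; exact amap_ne (pow_ne_zero n Polynomial.X_ne_zero))] at key
  have h1 : RatFunc.eval RatFunc.C t (algebraMap (Polynomial ℂ) F p) = Polynomial.eval₂ RatFunc.C t p := by
    simp [RatFunc.eval_algebraMap]
  have h2 : RatFunc.eval RatFunc.C t ((Xv:F) ^ n) = t ^ n := by
    rw [hXn, RatFunc.eval_algebraMap]
    simp [Polynomial.eval₂_pow]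
  rw [h1, h2] at key
  rw [subst, eq_div_iff (pow_ne_zero n ht), key]

def rev8 (q : ℂ) (p : Polynomial ℂ) (N : ℕ) : Polynomial ℂ :=
  ∑ i ∈ Finset.range (N+1), Polynomial.C (p.coeff i * q^i) * Polynomial.X^(N-i)

lemma rev8_spec (q : ℂ) (p : Polynomial ℂ) (N : ℕ) (h : p.natDegree ≤ N) :
    algebraMap (Polynomial ℂ) F (rev8 q p N)
      = Xv ^ N * Polynomial.eval₂ RatFunc.C (Cc q * Xv⁻¹) p := by
  rw [Polynomial.eval₂_eq_sum_range' RatFunc.C (Nat.lt_succ_of_le h), rev8, map_sum,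
    Finset.mul_sum]
  refine Finset.sum_congr rfl fun i hi => ?_
  have hi' : i ≤ N := Nat.lt_succ_iff.mp (Finset.mem_range.mp hi)
  have hXN : (Xv : F) ^ N = Xv ^ (N - i) * Xv ^ i := by
    rw [← pow_add, Nat.sub_add_cancel hi']
  rw [map_mul, map_pow, amap_X, amap_C, mul_pow, inv_pow, hXN]
  have hx : (Xv : F) ^ i ≠ 0 := pow_ne_zero _ Xv_ne
  simp only [Cc, map_mul, map_pow]
  field_simp

lemma rev8_eval (q x : ℂ) (hx : x ≠ 0) (p : Polynomial ℂ) (N : ℕ) (h : p.natDegree ≤ N) :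
    x ^ N * (rev8 q p N).eval (q * x⁻¹) = q ^ N * p.eval x := by
  rw [Polynomial.eval_eq_sum_range' (Nat.lt_succ_of_le h), rev8, Polynomial.eval_finset_sum,
    Finset.mul_sum, Finset.mul_sum]
  refine Finset.sum_congr rfl fun i hi => ?_
  have hi' : i ≤ N := Nat.lt_succ_iff.mp (Finset.mem_range.mp hi)
  have hxN : x ^ N = x ^ (N - i) * x ^ i := by rw [← pow_add, Nat.sub_add_cancel hi']
  have hqN : q ^ N = q ^ (N - i) * q ^ i := by rw [← pow_add, Nat.sub_add_cancel hi']
  have hxi : x ^ (N - i) ≠ 0 := pow_ne_zero _ hx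
  simp only [Polynomial.eval_mul, Polynomial.eval_C, Polynomial.eval_pow, Polynomial.eval_X]
  rw [mul_pow, inv_pow, hxN, hqN]
  field_simp

lemma rev8_mul_linear (q a : ℂ) (p₁ : Polynomial ℂ) (N : ℕ) (hN : 1 ≤ N)
    (h : p₁.natDegree ≤ N - 1) :
    rev8 q ((Polynomial.X - Polynomial.C a) * p₁) N
      = (Polynomial.C q - Polynomial.C a * Polynomial.X) * rev8 q p₁ (N - 1) := by
  apply RatFunc.algebraMap_injective (K := ℂ)
  have hdeg : ((Polynomial.X - Polynomial.C a) * p₁).natDegree ≤ N := by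
    calc ((Polynomial.X - Polynomial.C a) * p₁).natDegree
        ≤ (Polynomial.X - Polynomial.C a).natDegree + p₁.natDegree := Polynomial.natDegree_mul_le
      _ ≤ 1 + (N - 1) := by
          gcongr
          exact le_of_eq (Polynomial.natDegree_X_sub_C a)
      _ = N := by omega
  rw [rev8_spec q _ N hdeg, map_mul, rev8_spec q p₁ (N-1) h, Polynomial.eval₂_mul,
    Polynomial.eval₂_sub, Polynomial.eval₂_X, Polynomial.eval₂_C]
  have hXN : (Xv : F) ^ N = Xv * Xv ^ (N - 1) := by
    rw [← pow_succ']; congr 1; omega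
  rw [hXN, map_sub, map_mul, amap_C, amap_C, amap_X]
  have : (Xv : F) * (Cc q * Xv⁻¹ - RatFunc.C a) = Cc q - Cc a * Xv := by
    field_simp [Xv_ne]
    simp only [Cc]
  calc (Xv:F) * Xv ^ (N-1) * ((Cc q * Xv⁻¹ - RatFunc.C a) * Polynomial.eval₂ RatFunc.C (Cc q * Xv⁻¹) p₁)
      = (Xv * (Cc q * Xv⁻¹ - RatFunc.C a)) * (Xv ^ (N-1) * Polynomial.eval₂ RatFunc.C (Cc q * Xv⁻¹) p₁) := by ring
    _ = (Cc q - Cc a * Xv) * (Xv ^ (N-1) * Polynomial.eval₂ RatFunc.C (Cc q * Xv⁻¹) p₁) := by rw [this]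


lemma bridge (q c d : ℂ) (hq : q ≠ 0) (f : F) :
    T0op q c d f = -f ↔
      (Cc c * Xv - Cc q) * ((Cc d * Xv - Cc q) * f)
        = Cc q * ((Cc c - Xv) * ((Cc d - Xv) * subst (Cc q * Xv⁻¹) f)) := by
  have h1 := qmX2_ne q
  have h2 := Cc_ne hq
  have key : T0op q c d f + f
      = ((Cc c * Xv - Cc q) * ((Cc d * Xv - Cc q) * f)
          - Cc q * ((Cc c - Xv) * ((Cc d - Xv) * subst (Cc q * Xv⁻¹) f)))
        / (Cc q * (Cc q - Xv ^ 2)) := by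
    rw [T0op]
    field_simp
    ring
  rw [eq_neg_iff_add_eq_zero, key, div_eq_zero_iff]
  constructor
  · rintro (h | h)
    · exact sub_eq_zero.mp h
    · exact absurd h (mul_ne_zero h2 h1)
  · intro h
    exact Or.inl (sub_eq_zero.mpr h)

set_option maxHeartbeats 2000000

theorem stmt8 (q c d : ℂ) (hq : q ≠ 0) (hroot : ∀ m : ℕ, 1 ≤ m → q ^ m ≠ 1)
    (hc : c ≠ 0) (hd : d ≠ 0)
    (hcc : c ≠ q * c⁻¹) (hcd : c ≠ q * d⁻¹) (hdc : d ≠ q * c⁻¹) (hdd : d ≠ q * d⁻¹) :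
    ∀ f : RatFunc ℂ, IsLaurent f →
      (T0op q c d f = -f ↔
        ∃ g : RatFunc ℂ, IsLaurent g ∧ subst (Cc q * Xv⁻¹) g = g ∧
          f = Xv⁻¹ * (Cc c - Xv) * (Cc d - Xv) * g) := by
  intro f hfL
  rw [bridge q c d hq]
  constructor
  · intro heq
    by_cases hf0 : f = 0
    · exact ⟨0, ⟨0, 0, by simp⟩, by simp [subst], by rw [hf0]; simp⟩
    · obtain ⟨p, n, hfp⟩ := hfL
      have hp0 : p ≠ 0 := by rintro rfl; apply hf0; rw [hfp]; simp
      -- Step 1: the polynomial identity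
      have hstar : Polynomial.C (q^n) * ((Polynomial.C c * Polynomial.X - Polynomial.C q) *
          ((Polynomial.C d * Polynomial.X - Polynomial.C q) * (p * Polynomial.X ^ p.natDegree)))
        = Polynomial.C q * ((Polynomial.C c - Polynomial.X) *
          ((Polynomial.C d - Polynomial.X) * (rev8 q p p.natDegree * Polynomial.X ^ (2*n)))) := by
        set t : F := Cc q * Xv⁻¹ with ht_def
        have ht : t ≠ 0 := mul_ne_zero (Cc_ne hq) (inv_ne_zero Xv_ne)
        set N := p.natDegree with hN
        have hsf : subst t f = Polynomial.eval₂ RatFunc.C t p / t ^ n := by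
          rw [hfp]; exact subst_div_pow t ht p n
        have hrev := rev8_spec q p N le_rfl
        rw [← ht_def] at hrev
        apply RatFunc.algebraMap_injective (K := ℂ)
        simp only [map_mul, map_pow, map_sub, amap_C, amap_X]
        set sf := subst t f with hsf_def
        have hE : Polynomial.eval₂ RatFunc.C t p = sf * t ^ n := by
          rw [hsf, div_mul_cancel₀ _ (pow_ne_zero n ht)]
        have hfX : algebraMap (Polynomial ℂ) F p = f * Xv ^ n := by
          rw [hfp, div_mul_cancel₀ _ (pow_ne_zero n Xv_ne)]
        rw [hfX, hrev, hE, ht_def]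
        simp only [Cc, mul_pow, inv_pow] at heq ⊢
        have hX : (Xv : F) ≠ 0 := Xv_ne
        field_simp
        linear_combination (RatFunc.C q ^ n * Xv ^ (2*n)) * heq
      -- Step 2: factor out (X-c)(X-d)
      have hfac : ∃ s, p = (Polynomial.X - Polynomial.C c) *
          ((Polynomial.X - Polynomial.C d) * s) := by
        have hc2 : c * c - q ≠ 0 := by
          intro h
          apply hcc
          have hcq : c * c = q := by linear_combination h
          rw [← hcq]; field_simp
        have hd2 : d * d - q ≠ 0 := by
          intro h
          apply hdd
          have hdq : d * d = q := by linear_combination h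
          rw [← hdq]; field_simp
        have hcd2 : d * c - q ≠ 0 := by
          intro h
          apply hcd
          have : d * c = q := by linear_combination h
          rw [← this]; field_simp
        have hcd2' : c * d - q ≠ 0 := by intro h; apply hcd2; linear_combination h
        have hroot_c : p.eval c = 0 := by
          have hev := congrArg (Polynomial.eval c) hstar
          simp only [Polynomial.eval_mul, Polynomial.eval_sub, Polynomial.eval_C,
            Polynomial.eval_X, Polynomial.eval_pow, sub_self, zero_mul, mul_zero] at hev
          have h1 : q ^ n ≠ 0 := pow_ne_zero _ hq
          have h2 : c ^ p.natDegree ≠ 0 := pow_ne_zero _ hc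
          simp only [mul_eq_zero] at hev
          tauto
        have hroot_d : p.eval d = 0 := by
          have hev := congrArg (Polynomial.eval d) hstar
          simp only [Polynomial.eval_mul, Polynomial.eval_sub, Polynomial.eval_C,
            Polynomial.eval_X, Polynomial.eval_pow, sub_self, zero_mul, mul_zero] at hev
          have h1 : q ^ n ≠ 0 := pow_ne_zero _ hq
          have h2 : d ^ p.natDegree ≠ 0 := pow_ne_zero _ hd
          simp only [mul_eq_zero] at hev
          tauto
        set N := p.natDegree with hNdef
        by_cases hcd' : c = d
        · subst hcd'
          obtain ⟨p₁, hp₁⟩ := Polynomial.dvd_iff_isRoot.mpr hroot_c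
          have hp₁0 : p₁ ≠ 0 := fun h => hp0 (by rw [hp₁, h, mul_zero])
          have hdeg : N = 1 + p₁.natDegree := by
            rw [hNdef]
            rw [hp₁, Polynomial.natDegree_mul (Polynomial.X_sub_C_ne_zero c) hp₁0,
              Polynomial.natDegree_X_sub_C]
          have hN1 : 1 ≤ N := by omega
          have hrevfac := rev8_mul_linear q c p₁ N hN1 (by omega)
          rw [hp₁] at hstar
          rw [hrevfac] at hstar
          have hlin : (Polynomial.C c * Polynomial.X - Polynomial.C q : Polynomial ℂ) ≠ 0 := by
            intro h
            have := congrArg (fun r => Polynomial.coeff r 1) h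
            simp [hc] at this
          have hstar2 : Polynomial.C (q^n) * ((Polynomial.C c * Polynomial.X - Polynomial.C q) *
              ((Polynomial.X - Polynomial.C c) * (p₁ * Polynomial.X ^ N)))
              = -(Polynomial.C q * ((Polynomial.C c - Polynomial.X) *
                ((Polynomial.C c - Polynomial.X) * (rev8 q p₁ (N - 1) * Polynomial.X ^ (2*n))))) := by
            apply mul_left_cancel₀ hlin
            linear_combination hstar
          have hev := congrArg (Polynomial.eval (q * c⁻¹)) hstar2
          simp only [Polynomial.eval_mul, Polynomial.eval_sub, Polynomial.eval_C,
            Polynomial.eval_X, Polynomial.eval_pow, Polynomial.eval_neg] at hev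
          have hz : c * (q * c⁻¹) - q = 0 := by field_simp; ring
          rw [hz] at hev
          have hcmq : c - q * c⁻¹ ≠ 0 := sub_ne_zero.mpr hcc
          have hqc : q * c⁻¹ ≠ 0 := mul_ne_zero hq (inv_ne_zero hc)
          have hrev1 : (rev8 q p₁ (N - 1)).eval (q * c⁻¹) = 0 := by
            have h2n : (q * c⁻¹) ^ (2*n) ≠ 0 := pow_ne_zero _ hqc
            simp only [zero_mul, mul_zero] at hev
            by_contra hr
            exact (mul_ne_zero hq (mul_ne_zero hcmq (mul_ne_zero hcmq (mul_ne_zero hr h2n)))) (by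
              have := hev.symm
              rwa [neg_eq_zero] at this)
          have hkey := rev8_eval q c hc p₁ (N - 1) (by omega)
          rw [hrev1, mul_zero] at hkey
          have hp₁c : p₁.eval c = 0 := by
            have hqN : (q : ℂ) ^ (N - 1) ≠ 0 := pow_ne_zero _ hq
            rcases mul_eq_zero.mp hkey.symm with h | h
            · exact absurd h hqN
            · exact h
          obtain ⟨s, hs⟩ := Polynomial.dvd_iff_isRoot.mpr hp₁c
          exact ⟨s, by rw [hp₁, hs]⟩
        · obtain ⟨p₁, hp₁⟩ := Polynomial.dvd_iff_isRoot.mpr hroot_c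
          have hp₁d : p₁.eval d = 0 := by
            have := hroot_d
            rw [hp₁, Polynomial.eval_mul, Polynomial.eval_sub, Polynomial.eval_X,
              Polynomial.eval_C] at this
            rcases mul_eq_zero.mp this with h | h
            · exact absurd (by linear_combination h) (Ne.symm hcd')
            · exact h
          obtain ⟨s, hs⟩ := Polynomial.dvd_iff_isRoot.mpr hp₁d
          exact ⟨s, by rw [hp₁, hs]⟩
      obtain ⟨s, hps⟩ := hfac
      have hfps : f = algebraMap (Polynomial ℂ) F
          ((Polynomial.X - Polynomial.C c) * ((Polynomial.X - Polynomial.C d) * s)) / Xv ^ n := by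
        rw [hfp, hps]
      refine ⟨algebraMap (Polynomial ℂ) F (Polynomial.X * s) / Xv ^ n,
        ⟨Polynomial.X * s, n, rfl⟩, ?_, ?_⟩
      · -- invariance of g
        set t : F := Cc q * Xv⁻¹ with ht_def
        have ht : t ≠ 0 := mul_ne_zero (Cc_ne hq) (inv_ne_zero Xv_ne)
        set E := Polynomial.eval₂ RatFunc.C t s with hE
        have h1 : subst t (algebraMap (Polynomial ℂ) F (Polynomial.X * s) / Xv ^ n)
            = (t * E) / t ^ n := by
          rw [subst_div_pow t ht]
          simp only [Polynomial.eval₂_mul, Polynomial.eval₂_X, ← hE]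
        have hsf : subst t f = ((t - RatFunc.C c) * ((t - RatFunc.C d) * E)) / t ^ n := by
          rw [hfps, subst_div_pow t ht]
          simp only [Polynomial.eval₂_mul, Polynomial.eval₂_sub, Polynomial.eval₂_X,
            Polynomial.eval₂_C, ← hE]
        rw [hsf, hfps] at heq
        simp only [map_mul, map_sub, amap_C, amap_X] at heq
        set AS := algebraMap (Polynomial ℂ) F s with hAS
        have hM : ((RatFunc.C c * Xv - RatFunc.C q) * ((RatFunc.C d * Xv - RatFunc.C q)
            * ((RatFunc.C c - Xv) * (RatFunc.C d - Xv))) : F) ≠ 0 :=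
          mul_ne_zero (CXmC_ne hc q) (mul_ne_zero (CXmC_ne hd q)
            (mul_ne_zero (CmX_ne c) (CmX_ne d)))
        have hX : (Xv : F) ≠ 0 := Xv_ne
        have hq' : (RatFunc.C q : F) ≠ 0 := Cc_ne hq
        rw [ht_def] at heq
        simp only [Cc, mul_pow, inv_pow] at heq
        field_simp at heq
        have h2 : ((RatFunc.C c * Xv - RatFunc.C q) * ((RatFunc.C d * Xv - RatFunc.C q)
              * ((RatFunc.C c - Xv) * (RatFunc.C d - Xv)))) * (AS * (Xv * Xv * RatFunc.C q ^ n))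
            = ((RatFunc.C c * Xv - RatFunc.C q) * ((RatFunc.C d * Xv - RatFunc.C q)
              * ((RatFunc.C c - Xv) * (RatFunc.C d - Xv)))) * (RatFunc.C q * E * (Xv ^ n * Xv ^ n)) := by
          linear_combination heq
        have h3 := mul_left_cancel₀ hM h2
        rw [h1, ht_def]
        simp only [map_mul, amap_X, ← hAS]
        simp only [Cc, mul_pow, inv_pow]
        field_simp
        linear_combination -h3
      · rw [hfps]
        simp only [map_mul, map_sub, amap_C, amap_X]
        have hX : (Xv : F) ≠ 0 := Xv_ne
        field_simp
        ring
  · rintro ⟨g, ⟨pg, m, hg⟩, hsub, hf⟩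
    set t : F := Cc q * Xv⁻¹ with ht_def
    have ht : t ≠ 0 := mul_ne_zero (Cc_ne hq) (inv_ne_zero Xv_ne)
    set P : Polynomial ℂ := (Polynomial.C c - Polynomial.X) *
      ((Polynomial.C d - Polynomial.X) * pg) with hP
    have hfP : f = algebraMap (Polynomial ℂ) F P / Xv ^ (m + 1) := by
      rw [hf, hg, hP, map_mul, map_mul, map_sub, map_sub, amap_C, amap_C, amap_X]
      rw [pow_succ]
      field_simp
    set Eg : F := Polynomial.eval₂ RatFunc.C t pg with hEg
    have hsg : subst t g = Eg / t ^ m := by rw [hg]; exact subst_div_pow t ht pg m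
    have hgE : g = Eg / t ^ m := by rw [← hsub, hsg]
    have hsf : subst t f = (RatFunc.C c - t) * ((RatFunc.C d - t) * Eg) / t ^ (m + 1) := by
      rw [hfP, subst_div_pow t ht P (m+1), hP]
      simp only [Polynomial.eval₂_mul, Polynomial.eval₂_sub, Polynomial.eval₂_C,
        Polynomial.eval₂_X, ← hEg]
    rw [hsf, hf, hgE, ht_def]
    simp only [Cc, mul_pow, inv_pow]
    have hX : (Xv : F) ≠ 0 := Xv_ne
    have hXm : (Xv : F) ^ m ≠ 0 := pow_ne_zero _ hX
    have hq' : (RatFunc.C q : F) ≠ 0 := Cc_ne hq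
    field_simp
    ring

end
end
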